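/- arXiv:2207.02930 — 5 statements merged into one kernel-verified Lean document; each statement's English description precedes it below -/
import Mathlib

section
/- Every assignment problem admits a Rawlsian assignment: there exists a bistochastic matrix x that is not R-dominated by any other bistochastic matrix. Equivalently, the map x ↦ B^x attains a lexicographic minimum over the compact set of bistochastic matrices. -/
open Finset

/-- An n×n matrix with nonnegative real entries whose rows and columns each sum to 1. -/
def Bistochastic {n : ℕ} (x : Fin n → Fin n → ℝ) : Prop :=
  (∀ i o, 0 ≤ x i o) ∧ (∀ i, ∑ o, x i o = 1) ∧ (∀ o, ∑ i, x i o = 1)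

/-- `tailProb rank x i k` = probability that agent `i` receives an object ranked `k`-th
or worse (ranks are 0-indexed: rank 0 = most preferred). -/
def tailProb {n : ℕ} (rank : Fin n → Fin n → Fin n) (x : Fin n → Fin n → ℝ)
    (i k : Fin n) : ℝ :=
  ∑ o ∈ Finset.univ.filter (fun o => k ≤ rank i o), x i o

/-- The values of `v` rearranged in non-increasing order. -/
noncomputable def sortedDesc {n : ℕ} (v : Fin n → ℝ) : Fin n → ℝ :=
  fun j => v (Tuple.sort (fun i => -v i) j)

/-- Block `t` of `Bvec rank x` is the non-increasing rearrangement of the tail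
probabilities at threshold `n-1-t`; so blocks run from the worst rank down. -/
noncomputable def Bvec {n : ℕ} (rank : Fin n → Fin n → Fin n) (x : Fin n → Fin n → ℝ) :
    Fin n → Fin n → ℝ :=
  fun t => sortedDesc (fun i => tailProb rank x i t.rev)

/-- Lexicographic strict order on doubly-indexed vectors (outer index first). -/
def BlockLexLt {α β : Type*} [LinearOrder α] [LinearOrder β] (u v : α → β → ℝ) : Prop :=
  ∃ t s, u t s < v t s ∧ ∀ t' s', (t' < t ∨ (t' = t ∧ s' < s)) → u t' s' = v t' s'

/-- `x` Rawlsian-dominates `y`. -/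
def RDom {n : ℕ} (rank : Fin n → Fin n → Fin n) (x y : Fin n → Fin n → ℝ) : Prop :=
  BlockLexLt (Bvec rank x) (Bvec rank y)

/-- A Rawlsian assignment: a bistochastic matrix not R-dominated by any other. -/
def Rawlsian {n : ℕ} (rank : Fin n → Fin n → Fin n) (x : Fin n → Fin n → ℝ) : Prop :=
  Bistochastic x ∧ ∀ y, Bistochastic y → ¬ RDom rank y x

/-! ### Auxiliary lemmas -/

lemma sortedDesc_anti {n : ℕ} (v : Fin n → ℝ) : Antitone (sortedDesc v) := by
  intro a b hab
  have h := Tuple.monotone_sort (fun i => -v i) hab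
  simp only [Function.comp_apply] at h
  simpa [sortedDesc] using h

/-- `sortedDesc v j` is the max over (j+1)-element subsets of the min of `v` on the subset. -/
lemma sortedDesc_eq_sup' {n : ℕ} (v : Fin n → ℝ) (j : Fin n)
    (hPne : (Finset.univ.powersetCard (j.val + 1) : Finset (Finset (Fin n))).attach.Nonempty)
    (hSne : ∀ S ∈ (Finset.univ.powersetCard (j.val + 1) : Finset (Finset (Fin n))),
      S.Nonempty) :
    sortedDesc v j =
      (Finset.univ.powersetCard (j.val + 1)).attach.sup' hPne
        (fun S => S.1.inf' (hSne S.1 S.2) v) := by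
  set σ : Equiv.Perm (Fin n) := Tuple.sort (fun i => -v i) with hσ
  refine le_antisymm ?_ ?_
  · -- take S₀ = σ '' (Iic j)
    have hmem : (Finset.Iic j).image σ ∈ Finset.univ.powersetCard (j.val + 1) := by
      rw [Finset.mem_powersetCard]
      refine ⟨Finset.subset_univ _, ?_⟩
      rw [Finset.card_image_of_injective _ σ.injective, Fin.card_Iic]
    refine Finset.le_sup'_of_le _ (Finset.mem_attach _ ⟨_, hmem⟩) ?_
    refine Finset.le_inf' _ _ ?_
    intro b hb
    simp only [Finset.mem_image, Finset.mem_Iic] at hb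
    obtain ⟨i, hij, rfl⟩ := hb
    exact sortedDesc_anti v hij
  · refine Finset.sup'_le _ _ ?_
    rintro ⟨S, hS⟩ -
    have hcard : S.card = j.val + 1 := (Finset.mem_powersetCard.mp hS).2
    -- there is o ∈ S with j ≤ σ.symm o
    have : ∃ o ∈ S, j ≤ σ.symm o := by
      by_contra h
      push_neg at h
      have hsub : S.image σ.symm ⊆ Finset.Iio j := by
        intro i hi
        simp only [Finset.mem_image] at hi
        obtain ⟨o, ho, rfl⟩ := hi
        exact Finset.mem_Iio.mpr (h o ho)
      have := Finset.card_le_card hsub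
      rw [Finset.card_image_of_injective _ σ.symm.injective, hcard, Fin.card_Iio] at this
      omega
    obtain ⟨o, hoS, hjo⟩ := this
    calc S.inf' (hSne S hS) v ≤ v o := Finset.inf'_le _ hoS
      _ = sortedDesc v (σ.symm o) := by simp [sortedDesc, ← hσ]
      _ ≤ sortedDesc v j := sortedDesc_anti v hjo

lemma continuous_sortedDesc {n : ℕ} (j : Fin n) :
    Continuous (fun v : Fin n → ℝ => sortedDesc v j) := by
  have hSne : ∀ S ∈ (Finset.univ.powersetCard (j.val + 1) : Finset (Finset (Fin n))),
      S.Nonempty := by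
    intro S hS
    have := (Finset.mem_powersetCard.mp hS).2
    exact Finset.card_pos.mp (by omega)
  have hPne : (Finset.univ.powersetCard (j.val + 1) : Finset (Finset (Fin n))).attach.Nonempty := by
    rw [Finset.attach_nonempty_iff]
    refine Finset.powersetCard_nonempty.mpr ?_
    rw [Finset.card_fin]
    omega
  have heq : (fun v : Fin n → ℝ => sortedDesc v j) =
      fun v => (Finset.univ.powersetCard (j.val + 1)).attach.sup' hPne
        (fun S => S.1.inf' (hSne S.1 S.2) v) :=
    funext fun v => sortedDesc_eq_sup' v j hPne hSne
  rw [heq]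
  exact Continuous.finset_sup'_apply hPne fun S _ =>
    Continuous.finset_inf'_apply (hSne S.1 S.2) fun i _ => continuous_apply i

lemma continuous_Bvec {n : ℕ} (rank : Fin n → Fin n → Fin n) (t s : Fin n) :
    Continuous (fun x : Fin n → Fin n → ℝ => Bvec rank x t s) := by
  have h1 : Continuous (fun x : Fin n → Fin n → ℝ => fun i => tailProb rank x i t.rev) := by
    refine continuous_pi fun i => ?_
    unfold tailProb
    exact continuous_finset_sum _ fun o _ => (continuous_apply o).comp (continuous_apply i)
  exact (continuous_sortedDesc s).comp h1

/-- Lexicographic minimization over a compact set, for finitely many continuous objectives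
indexed by a linear order. -/
lemma exists_lexmin {E ι : Type*} [TopologicalSpace E] [LinearOrder ι]
    (f : ι → E → ℝ) (hf : ∀ i, Continuous (f i)) (T : Finset ι) :
    ∀ S : Set E, IsCompact S → S.Nonempty →
      ∃ x ∈ S, ∀ y ∈ S,
        ¬ ∃ i ∈ T, f i y < f i x ∧ ∀ j ∈ T, j < i → f j y = f j x := by
  induction T using Finset.strongInduction with
  | _ T ih =>
    intro S hS hne
    rcases T.eq_empty_or_nonempty with rfl | hT
    · obtain ⟨x, hx⟩ := hne
      exact ⟨x, hx, fun y hy ⟨i, hi, _⟩ => absurd hi (by simp)⟩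
    · set i0 := T.min' hT with hi0
      obtain ⟨x0, hx0S, hx0⟩ := hS.exists_isMinOn hne (hf i0).continuousOn
      set m := f i0 x0 with hm
      set S' := S ∩ f i0 ⁻¹' {m} with hS'def
      have hS' : IsCompact S' := hS.inter_right (isClosed_singleton.preimage (hf i0))
      have hne' : S'.Nonempty := ⟨x0, hx0S, rfl⟩
      obtain ⟨x, hxS', hx⟩ :=
        ih (T.erase i0) (Finset.erase_ssubset (T.min'_mem hT)) S' hS' hne'
      obtain ⟨hxS, hxm⟩ := hxS'
      have hxm' : f i0 x = m := hxm
      refine ⟨x, hxS, ?_⟩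
      rintro y hy ⟨i, hiT, hlt, heq⟩
      rcases eq_or_ne i i0 with hii | hne0
      · have h1 : m ≤ f i y := by rw [hii]; exact hx0 hy
        have h2 : f i x = m := by rw [hii, hxm']
        rw [h2] at hlt
        exact absurd hlt (not_lt.mpr h1)
      · have hlt0 : i0 < i := lt_of_le_of_ne (T.min'_le i hiT) (Ne.symm hne0)
        have hy0 : f i0 y = m := by rw [heq i0 (T.min'_mem hT) hlt0, hxm']
        have hy' : y ∈ S' := ⟨hy, hy0⟩
        exact hx y hy' ⟨i, Finset.mem_erase.mpr ⟨hne0, hiT⟩, hlt,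
          fun j hj hji => heq j (Finset.mem_of_mem_erase hj) hji⟩

lemma bistochastic_compact {n : ℕ} :
    IsCompact {x : Fin n → Fin n → ℝ | Bistochastic x} := by
  have hclosed : IsClosed {x : Fin n → Fin n → ℝ | Bistochastic x} := by
    have h1 : IsClosed {x : Fin n → Fin n → ℝ | ∀ i o, 0 ≤ x i o} := by
      have he : {x : Fin n → Fin n → ℝ | ∀ i o, 0 ≤ x i o} =
          ⋂ i, ⋂ o, {x : Fin n → Fin n → ℝ | 0 ≤ x i o} := by ext x; simp
      rw [he]
      refine isClosed_iInter fun i => isClosed_iInter fun o => ?_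
      exact isClosed_le continuous_const ((continuous_apply o).comp (continuous_apply i))
    have h2 : IsClosed {x : Fin n → Fin n → ℝ | ∀ i, ∑ o, x i o = 1} := by
      have he : {x : Fin n → Fin n → ℝ | ∀ i, ∑ o, x i o = 1} =
          ⋂ i, {x : Fin n → Fin n → ℝ | ∑ o, x i o = 1} := by ext x; simp
      rw [he]
      refine isClosed_iInter fun i => ?_
      exact isClosed_eq (continuous_finset_sum _ fun o _ =>
        (continuous_apply o).comp (continuous_apply i)) continuous_const
    have h3 : IsClosed {x : Fin n → Fin n → ℝ | ∀ o, ∑ i, x i o = 1} := by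
      have he : {x : Fin n → Fin n → ℝ | ∀ o, ∑ i, x i o = 1} =
          ⋂ o, {x : Fin n → Fin n → ℝ | ∑ i, x i o = 1} := by ext x; simp
      rw [he]
      refine isClosed_iInter fun o => ?_
      exact isClosed_eq (continuous_finset_sum _ fun i _ =>
        (continuous_apply o).comp (continuous_apply i)) continuous_const
    have : {x : Fin n → Fin n → ℝ | Bistochastic x} =
        {x | ∀ i o, 0 ≤ x i o} ∩ ({x | ∀ i, ∑ o, x i o = 1} ∩ {x | ∀ o, ∑ i, x i o = 1}) := by
      ext x; simp only [Bistochastic, Set.mem_setOf_eq, Set.mem_inter_iff]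
    rw [this]
    exact h1.inter (h2.inter h3)
  have hsub : {x : Fin n → Fin n → ℝ | Bistochastic x} ⊆
      Set.Icc (0 : Fin n → Fin n → ℝ) 1 := by
    rintro x ⟨hpos, hrow, _⟩
    constructor
    · intro i; intro o; exact hpos i o
    · intro i; intro o
      have : x i o ≤ ∑ o', x i o' :=
        Finset.single_le_sum (fun o' _ => hpos i o') (Finset.mem_univ o)
      simpa [hrow i] using this
  exact IsCompact.of_isClosed_subset isCompact_Icc hclosed hsub

lemma bistochastic_nonempty {n : ℕ} :
    Set.Nonempty {x : Fin n → Fin n → ℝ | Bistochastic x} := by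
  refine ⟨fun i o => if i = o then 1 else 0, ?_, ?_, ?_⟩
  · intro i o; positivity
  · intro i; simp
  · intro o; simp

/-- Every assignment problem admits a Rawlsian assignment. -/
theorem rawlsian_exists {n : ℕ} (rank : Fin n → Fin n → Fin n)
    (hrank : ∀ i, Function.Bijective (rank i)) :
    ∃ x : Fin n → Fin n → ℝ, Rawlsian rank x := by
  classical
  set f : (Fin n ×ₗ Fin n) → (Fin n → Fin n → ℝ) → ℝ :=
    fun p x => Bvec rank x (ofLex p).1 (ofLex p).2 with hf_def
  have hf : ∀ p, Continuous (f p) := fun p => continuous_Bvec rank _ _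
  obtain ⟨x, hxS, hx⟩ := exists_lexmin f hf Finset.univ
    {x : Fin n → Fin n → ℝ | Bistochastic x} bistochastic_compact bistochastic_nonempty
  refine ⟨x, hxS, ?_⟩
  intro y hy hdom
  obtain ⟨t, s, hlt, heq⟩ := hdom
  refine hx y hy ⟨toLex (t, s), Finset.mem_univ _, hlt, ?_⟩
  intro j _ hj
  have hj' : (ofLex j).1 < t ∨ (ofLex j).1 = t ∧ (ofLex j).2 < s := by
    have := Prod.Lex.lt_iff.mp hj
    exact this
  exact heq _ _ hj'
end

section
/- If two distinct assignments x and y satisfy B^x = B^y, then the averaged assignment z = (1/2)(x + y) R-dominates x or R-dominates y. -/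
open Finset

/-!
Fix a threshold `k` and let `p = b^x(k)`, `q = b^y(k)`, which are rearrangements of each other.
The sum of the `m` largest entries of a vector is a convex function of it, so the `m` largest
entries of `(p + q) / 2` sum to at most those of `p`. Comparing these partial sums at the first
position where `B^z` and `B^x` differ shows that `B^z` is smaller there. They do differ: if
`(p + q) / 2` were a rearrangement of `p`, equal sums of squares would force `p = q`, and the tail
probabilities determine the assignment because each agent ranks the objects injectively.
-/

theorem blockLexLt_of_le_at_first_ne {α β : Type*} [LinearOrder α] [LinearOrder β]
    [WellFoundedLT α] [WellFoundedLT β] {u v : α → β → ℝ} (hne : u ≠ v)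
    (hle : ∀ t s, (∀ t' s', (t' < t ∨ (t' = t ∧ s' < s)) → u t' s' = v t' s') →
      u t s ≤ v t s) :
    BlockLexLt u v := by
  set D : Set (α ×ₗ β) := {p | u (ofLex p).1 (ofLex p).2 ≠ v (ofLex p).1 (ofLex p).2}
  have hD : D.Nonempty := by
    obtain ⟨t, ht⟩ := Function.ne_iff.mp hne
    obtain ⟨s, hs⟩ := Function.ne_iff.mp ht
    exact ⟨toLex (t, s), hs⟩
  obtain ⟨⟨t, s⟩, hmin, hfirst⟩ := wellFounded_lt.has_min D hD
  have hagree : ∀ t' s', (t' < t ∨ (t' = t ∧ s' < s)) → u t' s' = v t' s' := fun t' s' h =>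
    not_not.mp fun hne' => hfirst (toLex (t', s')) hne' (Prod.Lex.toLex_lt_toLex.mpr h)
  exact ⟨t, s, (hle t s hagree).lt_of_ne hmin, hagree⟩

theorem Antitone.sum_le_sum_Iic {ι : Type*} [LinearOrder ι] [LocallyFiniteOrderBot ι]
    {f : ι → ℝ} (hf : Antitone f) {T : Finset ι} {s : ι} (hT : #T = #(Iic s)) :
    ∑ j ∈ T, f j ≤ ∑ j ∈ Iic s, f j := by
  classical
  rw [← sum_sdiff_le_sum_sdiff]
  calc ∑ j ∈ T \ Iic s, f j ≤ #(T \ Iic s) • f s :=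
        sum_le_card_nsmul _ _ _ fun j hj =>
          hf (not_le.mp (by simpa using (mem_sdiff.mp hj).2)).le
    _ = #(Iic s \ T) • f s := by rw [card_sdiff_comm hT]
    _ ≤ ∑ j ∈ Iic s \ T, f j :=
        card_nsmul_le_sum _ _ _ fun j hj => hf (mem_Iic.mp (mem_sdiff.mp hj).1)

theorem eq_of_sum_filter_le_eq {ι κ M : Type*} [Fintype ι] [LinearOrder κ] [WellFoundedGT κ]
    [AddCancelCommMonoid M] {r : ι → κ} (hr : Function.Injective r) {a b : ι → M}
    (h : ∀ k, ∑ o ∈ univ.filter (fun o => k ≤ r o), a o =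
      ∑ o ∈ univ.filter (fun o => k ≤ r o), b o) :
    a = b := by
  classical
  suffices ∀ k o, r o = k → a o = b o from funext fun o => this _ o rfl
  intro k
  induction k using WellFoundedGT.induction with
  | _ k ih =>
    intro o ho
    have hsplit :
        univ.filter (fun o' => k ≤ r o') = insert o (univ.filter (fun o' => k < r o')) := by
      ext o'
      simp [le_iff_lt_or_eq, ← ho, hr.eq_iff, eq_comm, or_comm]
    have hnot : o ∉ univ.filter (fun o' => k < r o') := by simp [ho]
    have htail : ∑ o' ∈ univ.filter (fun o' => k < r o'), a o' =
        ∑ o' ∈ univ.filter (fun o' => k < r o'), b o' :=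
      sum_congr rfl fun o' ho' => ih (r o') (mem_filter.mp ho').2 o' rfl
    have hk := h k
    rw [hsplit, sum_insert hnot, sum_insert hnot, htail] at hk
    exact add_right_cancel hk

namespace sortedDesc

variable {n : ℕ}

theorem antitone (v : Fin n → ℝ) : Antitone (sortedDesc v) := fun a b hab => by
  simpa [sortedDesc] using Tuple.monotone_sort (fun i => -v i) hab

theorem sum_comp (v : Fin n → ℝ) (g : ℝ → ℝ) : ∑ j, g (sortedDesc v j) = ∑ i, g (v i) :=
  Equiv.sum_comp (Tuple.sort fun i => -v i) fun i => g (v i)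

theorem sum_Iic_eq_sum_map (v : Fin n → ℝ) (s : Fin n) :
    ∑ j ∈ Iic s, sortedDesc v j =
      ∑ i ∈ (Iic s).map (Tuple.sort fun i => -v i).toEmbedding, v i := by
  rw [sum_map]; rfl

theorem sum_le_sum_Iic (v : Fin n → ℝ) {T : Finset (Fin n)} {s : Fin n} (hT : #T = #(Iic s)) :
    ∑ i ∈ T, v i ≤ ∑ j ∈ Iic s, sortedDesc v j := by
  set σ := Tuple.sort fun i => -v i
  calc ∑ i ∈ T, v i = ∑ j ∈ T.map σ.symm.toEmbedding, sortedDesc v j := by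
        rw [sum_map]; simp [sortedDesc, σ]
    _ ≤ ∑ j ∈ Iic s, sortedDesc v j := (antitone v).sum_le_sum_Iic (by rw [card_map, hT])

theorem sum_Iic_midpoint_le {p q : Fin n → ℝ} (hpq : sortedDesc p = sortedDesc q) (s : Fin n) :
    ∑ j ∈ Iic s, sortedDesc (fun i => (p i + q i) / 2) j ≤ ∑ j ∈ Iic s, sortedDesc p j := by
  rw [sum_Iic_eq_sum_map]
  set T := (Iic s).map (Tuple.sort fun i => -((p i + q i) / 2)).toEmbedding
  have hT : #T = #(Iic s) := card_map _
  have hp := sum_le_sum_Iic p hT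
  have hq := sum_le_sum_Iic q hT
  rw [← hpq] at hq
  rw [← sum_div, sum_add_distrib]
  linarith

theorem midpoint_le_of_eqOn_Iio {p q : Fin n → ℝ} (hpq : sortedDesc p = sortedDesc q) {s : Fin n}
    (hprefix : ∀ j < s, sortedDesc (fun i => (p i + q i) / 2) j = sortedDesc p j) :
    sortedDesc (fun i => (p i + q i) / 2) s ≤ sortedDesc p s := by
  have h := sum_Iic_midpoint_le hpq s
  rw [← sum_Iio_add_eq_sum_Iic, ← sum_Iio_add_eq_sum_Iic,
    sum_congr rfl fun j hj => hprefix j (mem_Iio.mp hj)] at h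
  linarith

theorem eq_of_midpoint_eq {p q : Fin n → ℝ} (hpq : sortedDesc p = sortedDesc q)
    (hmid : sortedDesc (fun i => (p i + q i) / 2) = sortedDesc p) : p = q := by
  have hsq (v : Fin n → ℝ) : ∑ j, sortedDesc v j ^ 2 = ∑ i, v i ^ 2 :=
    sum_comp v (· ^ 2)
  have hq : ∑ i, q i ^ 2 = ∑ i, p i ^ 2 := by
    have h := congrArg (∑ j, · j ^ 2) hpq.symm
    rwa [hsq, hsq] at h
  have hmid' : ∑ i, ((p i + q i) / 2) ^ 2 = ∑ i, p i ^ 2 := by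
    have h := congrArg (∑ j, · j ^ 2) hmid
    rwa [hsq, hsq] at h
  have hzero : ∑ i, (p i - q i) ^ 2 = 0 := by
    calc ∑ i, (p i - q i) ^ 2
        = 2 * ∑ i, p i ^ 2 + 2 * ∑ i, q i ^ 2 - 4 * ∑ i, ((p i + q i) / 2) ^ 2 := by
          rw [mul_sum, mul_sum, mul_sum, ← sum_add_distrib, ← sum_sub_distrib]
          exact sum_congr rfl fun i _ => by ring
      _ = 0 := by linarith
  funext i
  have := (sum_eq_zero_iff_of_nonneg fun i _ => sq_nonneg (p i - q i)).mp hzero i (mem_univ i)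
  linarith [pow_eq_zero_iff two_ne_zero |>.mp this]

end sortedDesc

theorem tailProb_midpoint {n : ℕ} (rank : Fin n → Fin n → Fin n) (x y : Fin n → Fin n → ℝ)
    (i k : Fin n) :
    tailProb rank (fun i o => (x i o + y i o) / 2) i k =
      (tailProb rank x i k + tailProb rank y i k) / 2 := by
  simp only [tailProb, ← sum_add_distrib, sum_div]

theorem eq_of_tailProb_eq {n : ℕ} {rank : Fin n → Fin n → Fin n}
    (hrank : ∀ i, Function.Injective (rank i)) {x y : Fin n → Fin n → ℝ}
    (h : ∀ i k, tailProb rank x i k = tailProb rank y i k) : x = y :=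
  funext fun i => eq_of_sum_filter_le_eq (hrank i) (h i)

theorem average_rdominates_general {n : ℕ} (rank : Fin n → Fin n → Fin n)
    (hrank : ∀ i, Function.Bijective (rank i))
    (x y : Fin n → Fin n → ℝ)
    (hne : x ≠ y) (hB : Bvec rank x = Bvec rank y) :
    RDom rank (fun i o => (x i o + y i o) / 2) x ∨
      RDom rank (fun i o => (x i o + y i o) / 2) y := by
  have hBz : ∀ t, Bvec rank (fun i o => (x i o + y i o) / 2) t =
      sortedDesc (fun i => (tailProb rank x i t.rev + tailProb rank y i t.rev) / 2) := fun t => by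
    simp only [Bvec, tailProb_midpoint]
  have hsorted : ∀ k : Fin n, sortedDesc (fun i => tailProb rank x i k) =
      sortedDesc (fun i => tailProb rank y i k) := fun k => by
    simpa [Bvec] using congrFun hB k.rev
  left
  refine blockLexLt_of_le_at_first_ne (fun hz => hne ?_) fun t s hprefix => ?_
  · refine eq_of_tailProb_eq (fun i => (hrank i).injective) fun i k => ?_
    have hk := (hBz k.rev).symm.trans (congrFun hz k.rev)
    simp only [Bvec, Fin.rev_rev] at hk
    exact congrFun (sortedDesc.eq_of_midpoint_eq (hsorted k) hk) i
  · rw [hBz]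
    exact sortedDesc.midpoint_le_of_eqOn_Iio (hsorted t.rev)
      fun j hj => (congrFun (hBz t) j).symm.trans (hprefix t j (Or.inr ⟨rfl, hj⟩))

/-- If two distinct assignments have the same vector `B`, then their average
R-dominates one of them. -/
theorem average_rdominates {n : ℕ} (rank : Fin n → Fin n → Fin n)
    (hrank : ∀ i, Function.Bijective (rank i))
    (x y : Fin n → Fin n → ℝ) (hx : Bistochastic x) (hy : Bistochastic y)
    (hne : x ≠ y) (hB : Bvec rank x = Bvec rank y) :
    RDom rank (fun i o => (x i o + y i o) / 2) x ∨
      RDom rank (fun i o => (x i o + y i o) / 2) y :=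
  average_rdominates_general rank hrank x y hne hB
end

section
/- In the Rawlsian assignment, some agent receives her least preferred object with positive probability if and only if all agents have the same least preferred object. -/
/-!
If the agents' worst objects are not all the same, Hall's theorem gives a permutation
assigning every agent an object other than her worst one. Its permutation matrix is
bistochastic and gives every agent probability zero of her worst object, i.e. its first
block of tail probabilities vanishes, so it Rawlsian-dominates any assignment that gives
some agent her worst object with positive probability. Conversely, the column of a shared
worst object sums to 1, so some agent receives it with positive probability.
-/

open Finset

theorem bistochastic_iff_mem_doublyStochastic {n : ℕ} {x : Fin n → Fin n → ℝ} :
    Bistochastic x ↔ Matrix.of x ∈ doublyStochastic ℝ (Fin n) :=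
  mem_doublyStochastic_iff_sum.symm

theorem bistochastic_permMatrix {n : ℕ} (σ : Equiv.Perm (Fin n)) :
    Bistochastic (σ.permMatrix ℝ) :=
  bistochastic_iff_mem_doublyStochastic.2 permMatrix_mem_doublyStochastic

theorem Bistochastic.exists_pos {n : ℕ} {x : Fin n → Fin n → ℝ} (hx : Bistochastic x)
    (o : Fin n) : ∃ i, 0 < x i o := by
  have hsum : ∑ _i : Fin n, (0 : ℝ) < ∑ i, x i o := by simp [hx.2.2 o]
  obtain ⟨i, -, hi⟩ := exists_lt_of_sum_lt hsum
  exact ⟨i, hi⟩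

theorem Equiv.Perm.exists_forall_apply_ne {α : Type*} [Fintype α] [DecidableEq α] {w : α → α}
    (hw : ∃ i j, w i ≠ w j) : ∃ σ : Equiv.Perm α, ∀ i, σ i ≠ w i := by
  obtain ⟨i₀, j₀, hij⟩ := hw
  have hall : ∀ s : Finset α, #s ≤ #(s.biUnion fun i => univ.erase (w i)) := by
    intro s
    by_cases hs : s = univ
    · have hcover : (s.biUnion fun i => univ.erase (w i)) = univ := by
        refine eq_univ_of_forall fun o => mem_biUnion.2 ?_
        rcases ne_or_eq o (w i₀) with h | h
        · exact ⟨i₀, hs ▸ mem_univ _, mem_erase.2 ⟨h, mem_univ o⟩⟩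
        · exact ⟨j₀, hs ▸ mem_univ _, mem_erase.2 ⟨h ▸ hij, mem_univ o⟩⟩
      rw [hcover, hs]
    · obtain rfl | ⟨k, hk⟩ := s.eq_empty_or_nonempty
      · simp
      calc #s ≤ Fintype.card α - 1 := Nat.le_sub_one_of_lt ((card_lt_iff_ne_univ s).2 hs)
        _ = #(univ.erase (w k)) := by rw [card_erase_of_mem (mem_univ _), card_univ]
        _ ≤ _ := card_le_card (subset_biUnion_of_mem (fun i => univ.erase (w i)) hk)
  obtain ⟨f, hf, hfw⟩ := (all_card_le_biUnion_card_iff_exists_injective _).1 hall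
  exact ⟨Equiv.ofBijective f hf.bijective_of_finite, fun i => (mem_erase.1 (hfw i)).1⟩

theorem exists_perm_forall_rank_ne_top {n : ℕ} [NeZero n] {rank : Fin n → Fin n → Fin n}
    (hrank : ∀ i, Function.Bijective (rank i)) (hshared : ¬ ∃ o, ∀ i, rank i o = ⊤) :
    ∃ σ : Equiv.Perm (Fin n), ∀ i, rank i (σ i) ≠ ⊤ := by
  choose w hw using fun i => (hrank i).surjective ⊤
  have hw_ne : ∃ i j, w i ≠ w j := by
    by_contra! hconst
    exact hshared ⟨w 0, fun i => hconst i 0 ▸ hw i⟩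
  obtain ⟨σ, hσ⟩ := Equiv.Perm.exists_forall_apply_ne hw_ne
  exact ⟨σ, fun i h => hσ i ((hrank i).injective (h.trans (hw i).symm))⟩

section TailProb

variable {n : ℕ} {rank : Fin n → Fin n → Fin n} {x : Fin n → Fin n → ℝ}

theorem tailProb_nonneg (hx : ∀ i o, 0 ≤ x i o) (i k : Fin n) : 0 ≤ tailProb rank x i k :=
  sum_nonneg fun o _ => hx i o

theorem le_tailProb (hx : ∀ i o, 0 ≤ x i o) {i k o : Fin n} (hko : k ≤ rank i o) :
    x i o ≤ tailProb rank x i k :=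
  single_le_sum (fun o _ => hx i o) (mem_filter.2 ⟨mem_univ o, hko⟩)

theorem tailProb_top_permMatrix [NeZero n] {σ : Equiv.Perm (Fin n)}
    (hσ : ∀ i, rank i (σ i) ≠ ⊤) (i : Fin n) : tailProb rank (σ.permMatrix ℝ) i ⊤ = 0 := by
  refine sum_eq_zero fun o ho => ?_
  have hσo : σ i ≠ o := fun h => hσ i (h ▸ top_le_iff.1 (mem_filter.1 ho).2)
  simp [Equiv.Perm.permMatrix, PEquiv.toMatrix_apply, hσo]

end TailProb

theorem forall_sortedDesc_iff {n : ℕ} {v : Fin n → ℝ} {p : ℝ → Prop} :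
    (∀ j, p (sortedDesc v j)) ↔ ∀ i, p (v i) :=
  ⟨fun h i => by simpa [sortedDesc] using h ((Tuple.sort fun i => -v i).symm i), fun h _ => h _⟩

theorem exists_sortedDesc_iff {n : ℕ} {v : Fin n → ℝ} {p : ℝ → Prop} :
    (∃ j, p (sortedDesc v j)) ↔ ∃ i, p (v i) :=
  ⟨fun ⟨_, h⟩ => ⟨_, h⟩, fun ⟨i, h⟩ => ⟨(Tuple.sort fun i => -v i).symm i, by simpa [sortedDesc]⟩⟩

theorem blockLexLt_of_isMin {α β : Type*} [LinearOrder α] [LinearOrder β] [WellFoundedLT β]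
    {u v : α → β → ℝ} {t : α} (ht : IsMin t) (hu : ∀ s, u t s = 0) (hv : ∀ s, 0 ≤ v t s)
    (hpos : ∃ s, 0 < v t s) : BlockLexLt u v := by
  obtain ⟨s, hs, hmin⟩ := wellFounded_lt.has_min {s | 0 < v t s} hpos
  refine ⟨t, s, (hu s).symm ▸ hs, ?_⟩
  rintro t' s' (ht' | ⟨rfl, hs'⟩)
  · exact absurd ht' ht.not_lt
  · rw [hu, le_antisymm (not_lt.1 fun h => hmin s' h hs') (hv s')]

theorem rDom_of_tailProb_top_eq_zero {n : ℕ} [NeZero n] {rank : Fin n → Fin n → Fin n}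
    {x y : Fin n → Fin n → ℝ} (hx : ∀ i o, 0 ≤ x i o) (hy : ∀ i, tailProb rank y i ⊤ = 0)
    {i o : Fin n} (hio : rank i o = ⊤) (hpos : 0 < x i o) : RDom rank y x :=
  blockLexLt_of_isMin (t := 0) (isMin_iff_eq_bot.2 rfl)
    ((forall_sortedDesc_iff (p := (· = 0))).2 hy)
    ((forall_sortedDesc_iff (p := (0 ≤ ·))).2 fun j => tailProb_nonneg hx j ⊤)
    ((exists_sortedDesc_iff (p := (0 < ·))).2 ⟨i, hpos.trans_le (le_tailProb hx hio.ge)⟩)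

/-- In the Rawlsian assignment, some agent receives her least preferred object with
positive probability iff all agents share the same least preferred object. -/
theorem rawlsian_worst_object {n : ℕ} (hn : 0 < n) (rank : Fin n → Fin n → Fin n)
    (hrank : ∀ i, Function.Bijective (rank i))
    (x : Fin n → Fin n → ℝ) (hx : Rawlsian rank x) :
    (∃ i o, (rank i o : ℕ) = n - 1 ∧ 0 < x i o) ↔
      (∃ o, ∀ i, (rank i o : ℕ) = n - 1) := by
  have : NeZero n := ⟨hn.ne'⟩
  have htop : ∀ k : Fin n, (k : ℕ) = n - 1 ↔ k = ⊤ := fun k => by rw [← Fin.val_top, Fin.val_inj]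
  simp only [htop]
  obtain ⟨hxb, hxr⟩ := hx
  constructor
  · rintro ⟨i, o, hio, hpos⟩
    by_contra hshared
    obtain ⟨σ, hσ⟩ := exists_perm_forall_rank_ne_top hrank hshared
    exact hxr _ (bistochastic_permMatrix σ)
      (rDom_of_tailProb_top_eq_zero hxb.1 (tailProb_top_permMatrix hσ) hio hpos)
  · rintro ⟨o, ho⟩
    obtain ⟨i, hi⟩ := hxb.exists_pos o
    exact ⟨i, o, ho i, hi⟩
end

section
/- Implementing an improving cycle weakly decreases every tail probability and strictly decreases at least one: if y is obtained from x by an improving cycle with transfer amount ε > 0, then b_i^y(k) ≤ b_i^x(k) for all agents i and all ranks k, with strict inequality for at least one pair (i,k). -/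
open Finset

/-!
Only the agents of the cycle change their rows, and by injectivity of `a` agent `a m` sees a
single transfer: `ε` of `ob m` is replaced by `ε` of the strictly preferred `ob (m - 1)`. Such a
transfer lowers the tail probability `b(k)` by `ε` for `rank (ob (m - 1)) < k ≤ rank (ob m)` and
leaves it unchanged for all other `k`.
-/

def RowTransfer {n : ℕ} (x y : Fin n → Fin n → ℝ) (i p q : Fin n) (ε : ℝ) : Prop :=
  ∀ o, y i o = x i o + (if o = p then ε else 0) - (if o = q then ε else 0)

section RowTransfer

variable {n : ℕ} {rank : Fin n → Fin n → Fin n} {x y : Fin n → Fin n → ℝ} {i p q k : Fin n}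
  {ε : ℝ}

theorem tailProb_congr_row (h : ∀ o, y i o = x i o) :
    tailProb rank y i k = tailProb rank x i k := by
  simp only [tailProb, h]

theorem RowTransfer.tailProb_eq (h : RowTransfer x y i p q ε) :
    tailProb rank y i k = tailProb rank x i k
      + (if k ≤ rank i p then ε else 0) - (if k ≤ rank i q then ε else 0) := by
  unfold RowTransfer at h
  simp only [tailProb, h, sum_sub_distrib, sum_add_distrib, sum_ite_eq', mem_filter, mem_univ,
    true_and]

theorem RowTransfer.tailProb_le (h : RowTransfer x y i p q ε) (hpq : rank i p < rank i q)
    (hε : 0 ≤ ε) : tailProb rank y i k ≤ tailProb rank x i k := by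
  rw [h.tailProb_eq]
  by_cases hkp : k ≤ rank i p
  · simp [hkp, hkp.trans hpq.le]
  · by_cases hkq : k ≤ rank i q <;> simp [hkp, hkq, hε]

theorem RowTransfer.tailProb_lt (h : RowTransfer x y i p q ε) (hpq : rank i p < rank i q)
    (hε : 0 < ε) : tailProb rank y i (rank i q) < tailProb rank x i (rank i q) := by
  rw [h.tailProb_eq, if_neg (not_le.mpr hpq), if_pos le_rfl]
  linarith

end RowTransfer

section ImprovingCycle

variable {n K : ℕ} {x y : Fin n → Fin n → ℝ} {a ob : Fin (K + 1) → Fin n} {ε : ℝ}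

theorem rowTransfer_of_cycle (ha : Function.Injective a)
    (hy : ∀ i o, y i o = x i o
      + (if ∃ k, a k = i ∧ ob (k - 1) = o then ε else 0)
      - (if ∃ k, a k = i ∧ ob k = o then ε else 0)) (m : Fin (K + 1)) :
    RowTransfer x y (a m) (ob (m - 1)) (ob m) ε := by
  intro o
  have h₁ : (∃ k, a k = a m ∧ ob (k - 1) = o) ↔ o = ob (m - 1) :=
    ⟨fun ⟨k, hk, hko⟩ => ha hk ▸ hko.symm, fun ho => ⟨m, rfl, ho.symm⟩⟩
  have h₂ : (∃ k, a k = a m ∧ ob k = o) ↔ o = ob m :=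
    ⟨fun ⟨k, hk, hko⟩ => ha hk ▸ hko.symm, fun ho => ⟨m, rfl, ho.symm⟩⟩
  rw [hy, if_congr h₁ rfl rfl, if_congr h₂ rfl rfl]

theorem row_eq_of_not_mem_cycle {i : Fin n} (hi : i ∉ Set.range a)
    (hy : ∀ i o, y i o = x i o
      + (if ∃ k, a k = i ∧ ob (k - 1) = o then ε else 0)
      - (if ∃ k, a k = i ∧ ob k = o then ε else 0)) (o : Fin n) :
    y i o = x i o := by
  have hcycle : ∀ {P : Fin (K + 1) → Prop}, ¬ ∃ k, a k = i ∧ P k :=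
    fun ⟨k, hk, _⟩ => hi ⟨k, hk⟩
  rw [hy, if_neg hcycle, if_neg hcycle, add_zero, sub_zero]

end ImprovingCycle

theorem improving_cycle_tailProb_general {n K : ℕ} (rank : Fin n → Fin n → Fin n)
    (x : Fin n → Fin n → ℝ)
    (a ob : Fin (K + 1) → Fin n) (ha : Function.Injective a)
    (himp : ∀ k, rank (a k) (ob (k - 1)) < rank (a k) (ob k))
    (ε : ℝ) (hεpos : 0 < ε)
    (y : Fin n → Fin n → ℝ)
    (hy : ∀ i o, y i o = x i o
      + (if ∃ k, a k = i ∧ ob (k - 1) = o then ε else 0)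
      - (if ∃ k, a k = i ∧ ob k = o then ε else 0)) :
    (∀ i k, tailProb rank y i k ≤ tailProb rank x i k) ∧
      (∃ i k, tailProb rank y i k < tailProb rank x i k) := by
  refine ⟨fun i k => ?_, ⟨a 0, _, (rowTransfer_of_cycle ha hy 0).tailProb_lt (himp 0) hεpos⟩⟩
  by_cases hi : i ∈ Set.range a
  · obtain ⟨m, rfl⟩ := hi
    exact (rowTransfer_of_cycle ha hy m).tailProb_le (himp m) hεpos.le
  · exact (tailProb_congr_row (row_eq_of_not_mem_cycle hi hy)).le

/-- Implementing an improving cycle weakly decreases every tail probability and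
strictly decreases at least one. -/
theorem improving_cycle_tailProb {n K : ℕ} (rank : Fin n → Fin n → Fin n)
    (hrank : ∀ i, Function.Bijective (rank i))
    (x : Fin n → Fin n → ℝ) (hx : Bistochastic x)
    (a ob : Fin (K + 1) → Fin n) (ha : Function.Injective a) (hob : Function.Injective ob)
    (hpos : ∀ k, 0 < x (a k) (ob k))
    (himp : ∀ k, rank (a k) (ob (k - 1)) < rank (a k) (ob k))
    (ε : ℝ) (hε : IsLeast (Set.range fun k => x (a k) (ob k)) ε) (hεpos : 0 < ε)
    (y : Fin n → Fin n → ℝ)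
    (hy : ∀ i o, y i o = x i o
      + (if ∃ k, a k = i ∧ ob (k - 1) = o then ε else 0)
      - (if ∃ k, a k = i ∧ ob k = o then ε else 0)) :
    (∀ i k, tailProb rank y i k ≤ tailProb rank x i k) ∧
      (∃ i k, tailProb rank y i k < tailProb rank x i k) :=
  improving_cycle_tailProb_general rank x a ob ha himp ε hεpos y hy
end

section
/- If x is an sd-efficient assignment, then there exists a profile of cardinal utilities u consistent with the agents' ordinal preferences (u_{io} > u_{io'} whenever agent i strictly prefers o to o') such that x maximizes the minimum expected utility: x ∈ argmax over bistochastic x' of min_i Σ_o x'_{io} u_{io}. -/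
open Finset

/-- `y` stochastically dominates `x` (w.r.t. the ranks): for every agent and every
object, the probability of an object weakly preferred to it is weakly larger, and `y ≠ x`. -/
def SDDominates {n : ℕ} (rank : Fin n → Fin n → Fin n) (y x : Fin n → Fin n → ℝ) : Prop :=
  y ≠ x ∧ ∀ i o, (∑ o' ∈ Finset.univ.filter (fun o' => rank i o' ≤ rank i o), x i o') ≤
    ∑ o' ∈ Finset.univ.filter (fun o' => rank i o' ≤ rank i o), y i o'

/-- `x` is sd-efficient: no bistochastic matrix stochastically dominates it. -/
def SDEfficient {n : ℕ} (rank : Fin n → Fin n → Fin n) (x : Fin n → Fin n → ℝ) : Prop :=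
  ¬ ∃ y, Bistochastic y ∧ SDDominates rank y x

lemma exists_chain {α : Type*} (R : α → α → Prop) {a b : α} (h : Relation.TransGen R a b) :
    ∃ m : ℕ, ∃ c : ℕ → α, 0 < m ∧ c 0 = a ∧ c m = b ∧ ∀ j < m, R (c j) (c (j+1)) := by
  induction h with
  | @single b' hab =>
    refine ⟨1, fun k => if k = 0 then a else b', one_pos, rfl, rfl, ?_⟩
    intro j hj
    interval_cases j
    simpa using hab
  | @tail b' c' hab hbc ih =>
    obtain ⟨m, c, hm, h0, hmb, hc⟩ := ih
    refine ⟨m + 1, fun k => if k = m + 1 then c' else c k, Nat.succ_pos m, ?_, ?_, ?_⟩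
    · have : (0:ℕ) ≠ m + 1 := by omega
      simp [this, h0]
    · simp
    · intro j hj
      rcases Nat.lt_or_ge j m with hjm | hjm
      · have h1 : j ≠ m + 1 := by omega
        have h2 : j + 1 ≠ m + 1 := by omega
        simpa [h1, h2, hjm.ne] using hc j hjm
      · have hjeq : j = m := by omega
        have h1 : j ≠ m + 1 := by omega
        simpa [h1, hjeq, hmb] using hbc

def Rrel {n : ℕ} (rank : Fin n → Fin n → Fin n) (x : Fin n → Fin n → ℝ) (o o' : Fin n) : Prop :=
  ∃ i, 0 < x i o' ∧ rank i o < rank i o'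

lemma acyclic {n : ℕ} (hn : 0 < n) (rank : Fin n → Fin n → Fin n)
    (x : Fin n → Fin n → ℝ) (hx : Bistochastic x) (heff : SDEfficient rank x)
    (o : Fin n) : ¬ Relation.TransGen (Rrel rank x) o o := by
  intro hcyc
  obtain ⟨m, c, hm, h0, hmc, hc⟩ := exists_chain _ hcyc
  have hagx : ∀ j, ∃ i : Fin n, j < m →
      (0 < x i (c (j+1)) ∧ rank i (c j) < rank i (c (j+1))) := by
    intro j
    by_cases hj : j < m
    · obtain ⟨i, hi⟩ := hc j hj
      exact ⟨i, fun _ => hi⟩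
    · exact ⟨⟨0, hn⟩, fun h => absurd h hj⟩
  choose ag hag using hagx
  obtain ⟨hxnn, hxrow, hxcol⟩ := hx
  have hmr : (0 : ℕ) ∈ Finset.range m := Finset.mem_range.mpr hm
  set D := (Finset.range m).inf' ⟨0, hmr⟩ (fun j => x (ag j) (c (j+1))) with hDdef
  have hDpos : 0 < D := by
    rw [hDdef]; refine (Finset.lt_inf'_iff ..).2 ?_
    intro j hj
    exact (hag j (Finset.mem_range.mp hj)).1
  set ε := D / m with hεdef
  have hmne : (m:ℝ) ≠ 0 := Nat.cast_ne_zero.mpr hm.ne'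
  have hεpos : 0 < ε := div_pos hDpos (by exact_mod_cast hm)
  have hεm : ε * m = D := by
    rw [hεdef]
    field_simp
  set T : Fin n → Fin n → ℕ → ℝ := fun i o' j =>
    (if ag j = i then ((if c j = o' then (1:ℝ) else 0) - (if c (j+1) = o' then 1 else 0)) else 0)
    with hTdef
  set y : Fin n → Fin n → ℝ :=
    fun i o' => x i o' + ε * ∑ j ∈ Finset.range m, T i o' j with hydef
  have hT_lb : ∀ i o' j, -1 ≤ T i o' j := by
    intro i o' j
    simp only [hTdef]
    split_ifs <;> norm_num
  -- nonnegativity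
  have hynn : ∀ i o', 0 ≤ y i o' := by
    intro i o'
    have hS_lb : -(m:ℝ) ≤ ∑ j ∈ Finset.range m, T i o' j := by
      calc -(m:ℝ) = ∑ _j ∈ Finset.range m, (-1 : ℝ) := by simp
        _ ≤ _ := Finset.sum_le_sum (fun j _ => hT_lb i o' j)
    by_cases hS : 0 ≤ ∑ j ∈ Finset.range m, T i o' j
    · exact add_nonneg (hxnn i o') (mul_nonneg hεpos.le hS)
    · push_neg at hS
      have hex : ∃ j ∈ Finset.range m, ag j = i ∧ c (j+1) = o' := by
        by_contra hno
        push_neg at hno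
        refine absurd (Finset.sum_nonneg fun j hj => ?_) (not_le.mpr hS)
        simp only [hTdef]
        by_cases h1 : ag j = i
        · have h2 : c (j+1) ≠ o' := hno j hj h1
          simp only [h1, if_true, h2, if_false]
          split_ifs <;> norm_num
        · simp [h1]
      obtain ⟨j, hjm, hji, hjo⟩ := hex
      have hxD : D ≤ x i o' := by
        rw [← hji, ← hjo]
        exact Finset.inf'_le _ hjm
      have h1 : ε * (-(m:ℝ)) ≤ ε * ∑ j ∈ Finset.range m, T i o' j :=
        mul_le_mul_of_nonneg_left hS_lb hεpos.le
      have h2 : ε * (-(m:ℝ)) = -D := by rw [mul_neg, hεm]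
      rw [hydef]
      dsimp only
      linarith
  -- row sums
  have hyrow : ∀ i, ∑ o', y i o' = 1 := by
    intro i
    rw [hydef]
    dsimp only
    rw [Finset.sum_add_distrib, hxrow i, ← Finset.mul_sum, Finset.sum_comm]
    have hz : ∀ j ∈ Finset.range m, ∑ o', T i o' j = 0 := by
      intro j _
      simp only [hTdef]
      by_cases h1 : ag j = i
      · simp [h1, Finset.sum_sub_distrib, Finset.sum_ite_eq]
      · simp [h1]
    rw [Finset.sum_congr rfl hz]
    simp
  -- column sums
  have hycol : ∀ o', ∑ i, y i o' = 1 := by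
    intro o'
    rw [hydef]
    dsimp only
    rw [Finset.sum_add_distrib, hxcol o', ← Finset.mul_sum, Finset.sum_comm]
    have hz : ∀ j ∈ Finset.range m, ∑ i, T i o' j =
        (if c j = o' then (1:ℝ) else 0) - (if c (j+1) = o' then 1 else 0) := by
      intro j _
      simp only [hTdef]
      simp [Finset.sum_ite_eq]
    rw [Finset.sum_congr rfl hz, Finset.sum_range_sub' (fun j => if c j = o' then (1:ℝ) else 0)]
    simp [h0, hmc]
  -- y ≠ x
  obtain ⟨j₀, hj₀m, hj₀min⟩ := Finset.exists_min_image (Finset.range m)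
    (fun j => rank (ag j) (c j)) ⟨0, hmr⟩
  have hne : y ≠ x := by
    have hterm : ∀ j ∈ Finset.range m, (0:ℝ) ≤ T (ag j₀) (c j₀) j := by
      intro j hj
      simp only [hTdef]
      by_cases h1 : ag j = ag j₀
      · have h2 : c (j+1) ≠ c j₀ := by
          intro hcc
          have hlt := (hag j (Finset.mem_range.mp hj)).2
          rw [hcc, h1] at hlt
          have hmin := hj₀min j hj
          rw [h1] at hmin
          exact lt_irrefl _ (lt_of_lt_of_le hlt hmin)
        simp only [h1, if_true, h2, if_false]
        split_ifs <;> norm_num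
      · simp [h1]
    have hj₀term : (1:ℝ) ≤ T (ag j₀) (c j₀) j₀ := by
      simp only [hTdef]
      have h2 : c (j₀+1) ≠ c j₀ := by
        intro hcc
        have hlt := (hag j₀ (Finset.mem_range.mp hj₀m)).2
        rw [hcc] at hlt
        exact lt_irrefl _ hlt
      simp [h2]
    have hSpos : (0:ℝ) < ∑ j ∈ Finset.range m, T (ag j₀) (c j₀) j := by
      have := Finset.single_le_sum hterm hj₀m
      linarith
    intro hyx
    have : y (ag j₀) (c j₀) = x (ag j₀) (c j₀) := by rw [hyx]
    rw [hydef] at this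
    dsimp only at this
    nlinarith
  -- SD inequalities
  have hsd : ∀ i o₀, (∑ o' ∈ Finset.univ.filter (fun o' => rank i o' ≤ rank i o₀), x i o') ≤
      ∑ o' ∈ Finset.univ.filter (fun o' => rank i o' ≤ rank i o₀), y i o' := by
    intro i o₀
    rw [hydef]
    dsimp only
    rw [Finset.sum_add_distrib, ← Finset.mul_sum, Finset.sum_comm]
    have hz : ∀ j ∈ Finset.range m,
        0 ≤ ∑ o' ∈ Finset.univ.filter (fun o' => rank i o' ≤ rank i o₀), T i o' j := by
      intro j hj
      simp only [hTdef]
      by_cases h1 : ag j = i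
      · simp only [h1, if_true]
        rw [Finset.sum_sub_distrib]
        have e1 : ∀ d : ℕ, (∑ o' ∈ Finset.univ.filter (fun o' => rank i o' ≤ rank i o₀),
            if c d = o' then (1:ℝ) else 0) = if rank i (c d) ≤ rank i o₀ then 1 else 0 := by
          intro d
          rw [Finset.sum_ite_eq (Finset.univ.filter (fun o' => rank i o' ≤ rank i o₀)) (c d)
            (fun _ => (1:ℝ))]
          simp [Finset.mem_filter]
        rw [e1, e1]
        have hlt := (hag j (Finset.mem_range.mp hj)).2
        rw [h1] at hlt
        split_ifs with ha hb hb
        · norm_num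
        · norm_num
        · exact absurd (le_of_lt (lt_of_lt_of_le hlt hb)) ha
        · norm_num
      · simp [h1]
    have : 0 ≤ ∑ j ∈ Finset.range m,
        ∑ o' ∈ Finset.univ.filter (fun o' => rank i o' ≤ rank i o₀), T i o' j :=
      Finset.sum_nonneg hz
    nlinarith
  exact heff ⟨y, ⟨hynn, hyrow, hycol⟩, hne, hsd⟩

noncomputable def Nv {n : ℕ} (rank : Fin n → Fin n → Fin n) (q : Fin n → ℝ) (i o : Fin n) : ℝ :=
  (Finset.univ.filter (fun o'' => rank i o'' ≤ rank i o)).inf' ⟨o, by simp⟩ q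

lemma Nv_le {n : ℕ} (rank : Fin n → Fin n → Fin n) (q : Fin n → ℝ) (i : Fin n) {o o'' : Fin n}
    (h : rank i o'' ≤ rank i o) : Nv rank q i o ≤ q o'' :=
  Finset.inf'_le _ (by simp [h])

lemma Nv_ge {n : ℕ} (rank : Fin n → Fin n → Fin n) (q : Fin n → ℝ) (i o : Fin n) {b : ℝ}
    (h : ∀ o'', rank i o'' ≤ rank i o → b ≤ q o'') : b ≤ Nv rank q i o := by
  refine Finset.le_inf' _ _ ?_
  intro o'' hmem
  exact h o'' (by simpa using hmem)

lemma Nv_mono {n : ℕ} (rank : Fin n → Fin n → Fin n) (q : Fin n → ℝ) (i : Fin n) {o o' : Fin n}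
    (h : rank i o ≤ rank i o') : Nv rank q i o' ≤ Nv rank q i o := by
  obtain ⟨o'', hmem, heq⟩ := Finset.exists_mem_eq_inf'
    (⟨o, by simp⟩ : (Finset.univ.filter (fun o'' => rank i o'' ≤ rank i o)).Nonempty) q
  have heq' : Nv rank q i o = q o'' := heq
  rw [heq']
  exact Nv_le rank q i (le_trans (by simpa using hmem) h)

noncomputable def evl {n : ℕ} (rank : Fin n → Fin n → Fin n) (x : Fin n → Fin n → ℝ)
    (i o : Fin n) : ℝ :=
  if 0 < x i o then 0 else (((rank i o : ℕ) : ℝ) + 1) / (2 * (n + 1))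

noncomputable def u0 {n : ℕ} (rank : Fin n → Fin n → Fin n) (x : Fin n → Fin n → ℝ)
    (q : Fin n → ℝ) (i o : Fin n) : ℝ :=
  Nv rank q i o - evl rank x i o

/-- If `x` is sd-efficient, there exists a consistent cardinal utility profile under
which `x` maximizes the minimum expected utility over all bistochastic matrices. -/
theorem sdefficient_maximin {n : ℕ} (hn : 0 < n) (rank : Fin n → Fin n → Fin n)
    (hrank : ∀ i, Function.Bijective (rank i))
    (x : Fin n → Fin n → ℝ) (hx : Bistochastic x) (heff : SDEfficient rank x) :
    ∃ u : Fin n → Fin n → ℝ,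
      (∀ i o o', rank i o < rank i o' → u i o' < u i o) ∧
      ∀ y : Fin n → Fin n → ℝ, Bistochastic y →
        (Finset.univ.inf' ⟨⟨0, hn⟩, Finset.mem_univ _⟩ fun i => ∑ o, y i o * u i o) ≤
          Finset.univ.inf' ⟨⟨0, hn⟩, Finset.mem_univ _⟩ fun i => ∑ o, x i o * u i o := by
  classical
  have hacyc : ∀ o : Fin n, ¬ Relation.TransGen (Rrel rank x) o o :=
    fun o => acyclic hn rank x hx heff o
  classical
  obtain ⟨hxnn, hxrow, hxcol⟩ := hx
  set R := Rrel rank x with hR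
  set q : Fin n → ℝ :=
    fun o => ((Finset.univ.filter (fun o' => Relation.TransGen R o o')).card : ℝ) with hq
  have hqstep : ∀ o o', R o o' → q o' + 1 ≤ q o := by
    intro o o' h
    have hnotmem : o' ∉ Finset.univ.filter (fun o'' => Relation.TransGen R o' o'') := by
      simp [hacyc o']
    have hsub : insert o' (Finset.univ.filter (fun o'' => Relation.TransGen R o' o'')) ⊆
        Finset.univ.filter (fun o'' => Relation.TransGen R o o'') := by
      intro a ha
      rcases Finset.mem_insert.mp ha with h1 | h1
      · subst h1
        simp [Relation.TransGen.single h]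
      · simp only [Finset.mem_filter, Finset.mem_univ, true_and] at h1 ⊢
        exact Relation.TransGen.head h h1
    have hcard := Finset.card_le_card hsub
    rw [Finset.card_insert_of_notMem hnotmem] at hcard
    simp only [hq]
    exact_mod_cast hcard
  -- epsilon term facts
  have hnpos : (0:ℝ) < 2 * (n + 1) := by positivity
  have he_nonneg : ∀ i o, 0 ≤ evl rank x i o := by
    intro i o
    simp only [evl]
    split_ifs
    · exact le_refl 0
    · positivity
  have he_half : ∀ i o, evl rank x i o ≤ 1/2 := by
    intro i o
    simp only [evl]
    split_ifs
    · norm_num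
    · rw [div_le_iff₀ hnpos]
      have := (rank i o).isLt
      have hcast : ((rank i o : ℕ) : ℝ) + 1 ≤ (n : ℝ) := by exact_mod_cast this
      linarith
  have he_lt : ∀ i o o', rank i o < rank i o' →
      evl rank x i o < (((rank i o' : ℕ) : ℝ) + 1) / (2 * (n + 1)) := by
    intro i o o' hlt
    have hcast : ((rank i o : ℕ) : ℝ) < ((rank i o' : ℕ) : ℝ) := by exact_mod_cast hlt
    simp only [evl]
    split_ifs
    · positivity
    · rw [div_lt_div_iff₀ hnpos hnpos]
      nlinarith
  -- N equals q on the support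
  have hsupp : ∀ i o, 0 < x i o → Nv rank q i o = q o := by
    intro i o hpos
    refine le_antisymm (Nv_le rank q i (le_refl _)) (Nv_ge rank q i o ?_)
    intro o'' hle
    rcases eq_or_lt_of_le hle with heq | hlt
    · have : o'' = o := (hrank i).injective heq
      rw [this]
    · have := hqstep o'' o ⟨i, hpos, hlt⟩
      linarith
  have hqlower : ∀ i o o', rank i o < rank i o' → 0 < x i o' → q o' + 1 ≤ Nv rank q i o := by
    intro i o o' hlt hpos
    refine Nv_ge rank q i o ?_
    intro o'' hle
    exact hqstep o'' o' ⟨i, hpos, lt_of_le_of_lt hle hlt⟩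
  -- consistency of u0
  have hcons : ∀ i o o', rank i o < rank i o' → u0 rank x q i o' < u0 rank x q i o := by
    intro i o o' hlt
    simp only [u0]
    by_cases hsup : 0 < x i o'
    · have h1 : q o' + 1 ≤ Nv rank q i o := hqlower i o o' hlt hsup
      have h2 : Nv rank q i o' = q o' := hsupp i o' hsup
      have h3 : evl rank x i o ≤ 1/2 := he_half i o
      have h4 : evl rank x i o' = 0 := by simp only [evl]; rw [if_pos hsup]
      rw [h2, h4]
      linarith
    · have h1 : Nv rank q i o' ≤ Nv rank q i o := Nv_mono rank q i hlt.le
      have h2 : evl rank x i o < (((rank i o' : ℕ) : ℝ) + 1) / (2 * (n + 1)) := he_lt i o o' hlt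
      have h4 : evl rank x i o' = (((rank i o' : ℕ) : ℝ) + 1) / (2 * (n + 1)) := by
        simp only [evl]; rw [if_neg hsup]
      rw [h4] at *
      linarith
  -- u0 ≤ q, and equality on support of x
  have hule : ∀ i o, u0 rank x q i o ≤ q o := by
    intro i o
    simp only [u0]
    have h1 := he_nonneg i o
    have h2 : Nv rank q i o ≤ q o := Nv_le rank q i (le_refl (rank i o))
    linarith
  have hxu : ∀ i o, x i o * u0 rank x q i o = x i o * q o := by
    intro i o
    by_cases hpos : 0 < x i o
    · simp only [u0]
      have h4 : evl rank x i o = 0 := by simp only [evl]; rw [if_pos hpos]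
      rw [h4, hsupp i o hpos]
      ring
    · have hz : x i o = 0 := le_antisymm (not_lt.mp hpos) (hxnn i o)
      rw [hz]
      ring
  -- total utility bounds
  have htot : ∀ y : Fin n → Fin n → ℝ, Bistochastic y →
      ∑ i, ∑ o, y i o * u0 rank x q i o ≤ ∑ o, q o := by
    rintro y ⟨hynn, hyrow, hycol⟩
    calc ∑ i, ∑ o, y i o * u0 rank x q i o ≤ ∑ i, ∑ o, y i o * q o := by
          refine Finset.sum_le_sum fun i _ => Finset.sum_le_sum fun o _ => ?_
          exact mul_le_mul_of_nonneg_left (hule i o) (hynn i o)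
      _ = ∑ o, (∑ i, y i o) * q o := by
          rw [Finset.sum_comm]
          simp [Finset.sum_mul]
      _ = ∑ o, q o := by
          refine Finset.sum_congr rfl fun o _ => ?_
          rw [hycol o, one_mul]
  have hxtot : ∑ i, ∑ o, x i o * u0 rank x q i o = ∑ o, q o := by
    calc ∑ i, ∑ o, x i o * u0 rank x q i o = ∑ i, ∑ o, x i o * q o := by
          refine Finset.sum_congr rfl fun i _ => Finset.sum_congr rfl fun o _ => hxu i o
      _ = ∑ o, (∑ i, x i o) * q o := by
          rw [Finset.sum_comm]
          simp [Finset.sum_mul]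
      _ = ∑ o, q o := by
          refine Finset.sum_congr rfl fun o _ => ?_
          rw [hxcol o, one_mul]
  -- final utilities
  set C : Fin n → ℝ := fun i => ∑ o, x i o * u0 rank x q i o with hC
  refine ⟨fun i o => u0 rank x q i o - C i, ?_, ?_⟩
  · intro i o o' h
    have := hcons i o o' h
    simp only [sub_lt_sub_iff_right]
    exact this
  · intro y hy
    have hx0 : ∀ i, ∑ o, x i o * (u0 rank x q i o - C i) = 0 := by
      intro i
      have : ∑ o, x i o * (u0 rank x q i o - C i)
          = (∑ o, x i o * u0 rank x q i o) - (∑ o, x i o) * C i := by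
        rw [Finset.sum_mul, ← Finset.sum_sub_distrib]
        refine Finset.sum_congr rfl fun o _ => by ring
      rw [this, hxrow i, one_mul]
      simp [hC]
    have hRHS : (Finset.univ.inf' ⟨⟨0, hn⟩, Finset.mem_univ _⟩
        fun i => ∑ o, x i o * (u0 rank x q i o - C i)) = 0 := by
      have hfun : (fun i : Fin n => ∑ o, x i o * (u0 rank x q i o - C i))
          = fun _ => (0:ℝ) := funext hx0
      rw [hfun]; exact Finset.inf'_const _ _
    have hCsum : ∑ i, C i = ∑ o, q o := by
      rw [hC]
      exact hxtot
    have hysum : ∑ i, ∑ o, y i o * (u0 rank x q i o - C i) ≤ 0 := by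
      have h1 : ∀ i, ∑ o, y i o * (u0 rank x q i o - C i)
          = (∑ o, y i o * u0 rank x q i o) - C i := by
        intro i
        have : ∑ o, y i o * (u0 rank x q i o - C i)
            = (∑ o, y i o * u0 rank x q i o) - (∑ o, y i o) * C i := by
          rw [Finset.sum_mul, ← Finset.sum_sub_distrib]
          refine Finset.sum_congr rfl fun o _ => by ring
        rw [this, hy.2.1 i, one_mul]
      calc ∑ i, ∑ o, y i o * (u0 rank x q i o - C i)
          = (∑ i, ∑ o, y i o * u0 rank x q i o) - ∑ i, C i := by
            rw [← Finset.sum_sub_distrib]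
            exact Finset.sum_congr rfl fun i _ => h1 i
        _ ≤ (∑ o, q o) - (∑ o, q o) := by
            have := htot y hy
            rw [hCsum]
            linarith
        _ = 0 := by ring
    have hex : ∃ i : Fin n, ∑ o, y i o * (u0 rank x q i o - C i) ≤ 0 := by
      by_contra hno
      push_neg at hno
      have hpos : 0 < ∑ i, ∑ o, y i o * (u0 rank x q i o - C i) :=
        Finset.sum_pos (fun i _ => hno i) ⟨⟨0, hn⟩, Finset.mem_univ _⟩
      linarith
    obtain ⟨i, hi⟩ := hex
    rw [hRHS]
    exact le_trans (Finset.inf'_le _ (Finset.mem_univ i)) hi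
end
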